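/- If f̃ : [0,1] → ℝ² is a simple closed curve and f̃' = f̃ + a for some a ∈ ℝ² with Im(f̃) ∩ Im(f̃') = ∅ and Im(f̃) contained in the interior region Ũ' of f̃', then D̃ ⊆ Ũ' where D̃ is the closed Jordan region of f̃; moreover if additionally the Lebesgue measures of D̃ and D̃' are equal this situation is impossible (contradiction), since Ũ' \ D̃ is a nonempty open set of positive measure. -/

import Mathlib

/-!
If the translate `K + a` of the curve `K` met the bounded component `U` of `ℝ² \ K`, then, being
connected and disjoint from `K`, it would lie entirely in `U`. The union `W` of the unbounded
components of `ℝ² \ K` would then miss `K + a`, so `W ⊆ W + a`; as `ℝ² \ W` is bounded and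
contains `K`, iterating the translation forces `a = 0`, contradicting `K ∩ (K + a) = ∅`.
Hence `closure U ⊆ U ∪ K` misses `K + a`; being connected and meeting `K ⊆ U'`, it lies in `U'`.
A point of `closure U'` on `K + a` lies outside `closure U`, so `U' \ closure U` is a nonempty
open set and `vol (closure U) < vol U' ≤ vol (closure U')`.
-/

open MeasureTheory Set Bornology Metric
open scoped Pointwise

section Topology

variable {X : Type*} [TopologicalSpace X] {K : Set X} {x : X}

theorem closure_connectedComponentIn_compl_subset [LocallyConnectedSpace X] (hK : IsClosed K)
    (x : X) : closure (connectedComponentIn Kᶜ x) ⊆ connectedComponentIn Kᶜ x ∪ K := by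
  intro z hz
  by_cases hzK : z ∈ K
  · exact Or.inr hzK
  · left
    obtain ⟨w, hwz, hwx⟩ := mem_closure_iff.mp hz _ hK.isOpen_compl.connectedComponentIn
      (mem_connectedComponentIn hzK)
    rw [connectedComponentIn_eq hwx, ← connectedComponentIn_eq hwz]
    exact mem_connectedComponentIn hzK

theorem closure_connectedComponentIn_compl_inter_nonempty [LocallyConnectedSpace X]
    [PreconnectedSpace X] (hK : IsClosed K) (hKne : K.Nonempty) (hx : x ∉ K) :
    (closure (connectedComponentIn Kᶜ x) ∩ K).Nonempty := by
  by_contra h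
  rw [not_nonempty_iff_eq_empty, ← disjoint_iff_inter_eq_empty] at h
  have hclosed : IsClosed (connectedComponentIn Kᶜ x) := closure_subset_iff_isClosed.mp
    fun z hz => (closure_connectedComponentIn_compl_subset hK x hz).resolve_right
      (h.notMem_of_mem_left hz)
  rcases isClopen_iff.mp ⟨hclosed, hK.isOpen_compl.connectedComponentIn⟩ with hU | hU
  · exact (hU ▸ mem_connectedComponentIn hx : x ∈ (∅ : Set X))
  · obtain ⟨k, hk⟩ := hKne
    exact connectedComponentIn_subset Kᶜ x (by rw [hU]; exact mem_univ k) hk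

theorem closure_connectedComponentIn_subset_connectedComponentIn [LocallyConnectedSpace X]
    [PreconnectedSpace X] {K' : Set X} {x' : X} (hK : IsClosed K) (hKne : K.Nonempty)
    (hx : x ∉ K) (hdisj : Disjoint (closure (connectedComponentIn Kᶜ x)) K')
    (hKU' : K ⊆ connectedComponentIn K'ᶜ x') :
    closure (connectedComponentIn Kᶜ x) ⊆ connectedComponentIn K'ᶜ x' := by
  obtain ⟨q, hqU, hqK⟩ := closure_connectedComponentIn_compl_inter_nonempty hK hKne hx
  rw [connectedComponentIn_eq (hKU' hqK)]
  exact isPreconnected_connectedComponentIn.closure.subset_connectedComponentIn hqU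
    hdisj.subset_compl_right

theorem connectedComponentIn_compl_diff_closure_nonempty [LocallyConnectedSpace X]
    [PreconnectedSpace X] {S : Set X} (hK : IsClosed K) (hKne : K.Nonempty) (hx : x ∉ K)
    (hdisj : Disjoint (closure S) K) : (connectedComponentIn Kᶜ x \ closure S).Nonempty := by
  obtain ⟨q, hqU, hqK⟩ := closure_connectedComponentIn_compl_inter_nonempty hK hKne hx
  obtain ⟨z, hzS, hzU⟩ := mem_closure_iff.1 hqU _ isClosed_closure.isOpen_compl
    (hdisj.notMem_of_mem_right hqK)
  exact ⟨z, hzU, hzS⟩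

end Topology

section OuterDomain

variable {X : Type*} [TopologicalSpace X] [Bornology X] {K K' : Set X} {x : X}

def outerDomain (K : Set X) : Set X :=
  {x | ¬IsBounded (connectedComponentIn Kᶜ x)}

theorem connectedComponentIn_subset_outerDomain (hx : x ∈ outerDomain K) :
    connectedComponentIn Kᶜ x ⊆ outerDomain K := fun y hy => by
  change ¬IsBounded _
  rwa [← connectedComponentIn_eq hy]

theorem outerDomain_subset_compl : outerDomain K ⊆ Kᶜ := fun x hx hxK =>
  hx (by rw [connectedComponentIn_eq_empty (not_not_intro hxK)]; exact isBounded_empty)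

theorem outerDomain_subset_of_disjoint (h : Disjoint (outerDomain K) K') :
    outerDomain K ⊆ outerDomain K' := fun x hx hbdd => by
  have hsub : connectedComponentIn Kᶜ x ⊆ connectedComponentIn K'ᶜ x :=
    isPreconnected_connectedComponentIn.subset_connectedComponentIn
      (mem_connectedComponentIn (outerDomain_subset_compl hx))
      ((connectedComponentIn_subset_outerDomain hx).trans h.subset_compl_right)
  exact hx (hbdd.subset hsub)

theorem disjoint_outerDomain_connectedComponentIn (hU : IsBounded (connectedComponentIn Kᶜ x)) :
    Disjoint (outerDomain K) (connectedComponentIn Kᶜ x) :=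
  disjoint_left.2 fun _ hy hyx => hy (connectedComponentIn_eq hyx ▸ hU)

end OuterDomain

section Translation

variable {E : Type*} [NormedAddCommGroup E]

theorem connectedComponentIn_vadd (a : E) (s : Set E) (x : E) :
    connectedComponentIn (a +ᵥ s) (a +ᵥ x) = a +ᵥ connectedComponentIn s x := by
  by_cases hx : x ∈ s
  · have h := (Homeomorph.addLeft a).image_connectedComponentIn hx
    simp only [Homeomorph.coe_addLeft, ← vadd_eq_add, image_vadd] at h
    exact h.symm
  · rw [connectedComponentIn_eq_empty hx, connectedComponentIn_eq_empty
      (by rwa [vadd_mem_vadd_set_iff]), vadd_set_empty]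

theorem isBounded_vadd_iff {a : E} {s : Set E} : IsBounded (a +ᵥ s) ↔ IsBounded s :=
  ⟨fun h => by simpa using h.vadd (-a), fun h => h.vadd a⟩

theorem outerDomain_vadd (a : E) (K : Set E) : outerDomain (a +ᵥ K) = a +ᵥ outerDomain K := by
  ext y
  obtain ⟨z, rfl⟩ : ∃ z, y = a +ᵥ z := ⟨-a +ᵥ y, (vadd_neg_vadd a y).symm⟩
  simp only [outerDomain, vadd_mem_vadd_set_iff, mem_ofPred_eq, ← vadd_set_compl,
    connectedComponentIn_vadd, isBounded_vadd_iff]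

variable [NormedSpace ℝ E]

theorem eq_zero_of_vadd_subset_of_isBounded {S : Set E} {a : E} (hS : IsBounded S)
    (hne : S.Nonempty) (h : a +ᵥ S ⊆ S) : a = 0 := by
  obtain ⟨x, hx⟩ := hne
  obtain ⟨C, hC⟩ := isBounded_iff_forall_norm_le.1 hS
  have hmem : ∀ n : ℕ, n • a + x ∈ S := by
    intro n
    induction n with
    | zero => simpa using hx
    | succ n ih => rw [succ_nsmul', add_assoc]; exact h (vadd_mem_vadd_set ih)
  have hle : ∀ n : ℕ, n * ‖a‖ ≤ 2 * C := fun n => by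
    calc (n : ℝ) * ‖a‖ = ‖(n • a + x) - x‖ := by
          rw [add_sub_cancel_right, RCLike.norm_nsmul ℝ, nsmul_eq_mul]
      _ ≤ ‖n • a + x‖ + ‖x‖ := norm_sub_le _ _
      _ ≤ 2 * C := by linarith [hC _ (hmem n), hC x hx]
  by_contra ha
  obtain ⟨n, hn⟩ := exists_nat_gt (2 * C / ‖a‖)
  linarith [hle n, (div_lt_iff₀ (norm_pos_iff.2 ha)).1 hn]

theorem isPreconnected_setOf_lt_norm (h : 1 < Module.rank ℝ E) {R : ℝ} (hR : 0 ≤ R) :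
    IsPreconnected {z : E | R < ‖z‖} := by
  have : {z : E | R < ‖z‖} = (fun p : E × ℝ => p.2 • p.1) '' (sphere 0 1 ×ˢ Ioi R) := by
    ext z
    constructor
    · intro hz
      have hz0 : 0 < ‖z‖ := hR.trans_lt hz
      refine ⟨(‖z‖⁻¹ • z, ‖z‖), ⟨?_, hz⟩, ?_⟩
      · simp [norm_smul, inv_mul_cancel₀ hz0.ne']
      · simp [smul_smul, mul_inv_cancel₀ hz0.ne']
    · rintro ⟨⟨v, t⟩, ⟨hv, ht : R < t⟩, rfl⟩
      rw [mem_sphere_zero_iff_norm] at hv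
      simpa [norm_smul, hv, abs_of_pos (hR.trans_lt ht)] using ht
  rw [this]
  exact ((isPreconnected_sphere h 0 1).prod isPreconnected_Ioi).image _
    (continuous_snd.smul continuous_fst).continuousOn

theorem isBounded_compl_outerDomain (h : 1 < Module.rank ℝ E) {K : Set E} (hK : IsBounded K) :
    IsBounded (outerDomain K)ᶜ := by
  have : Nontrivial E := (rank_pos_iff_nontrivial (R := ℝ)).1 (zero_lt_one.trans h)
  obtain ⟨R, hR, hKR⟩ : ∃ R, 0 ≤ R ∧ K ⊆ closedBall 0 R := by
    obtain ⟨R, hR⟩ := hK.subset_closedBall 0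
    exact ⟨max R 0, le_max_right _ _, hR.trans (closedBall_subset_closedBall (le_max_left _ _))⟩
  refine (isBounded_closedBall (x := 0) (r := R)).subset fun z hz => ?_
  by_contra hzR
  rw [mem_closedBall_zero_iff, not_le] at hzR
  have hfar : {z : E | R < ‖z‖} ⊆ connectedComponentIn Kᶜ z :=
    (isPreconnected_setOf_lt_norm h hR).subset_connectedComponentIn hzR
      fun y hy hyK => (mem_closedBall_zero_iff.1 (hKR hyK)).not_gt hy
  refine hz fun hbdd => ?_
  obtain ⟨C, hC⟩ := isBounded_iff_forall_norm_le.1 hbdd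
  obtain ⟨y, hy⟩ := NormedSpace.exists_lt_norm ℝ E (max R C)
  exact (hC y (hfar (le_max_left R C |>.trans_lt hy))).not_gt ((le_max_right R C).trans_lt hy)

theorem disjoint_vadd_connectedComponentIn_compl (h : 1 < Module.rank ℝ E) {K : Set E} {a x : E}
    (hKb : IsBounded K) (hKc : IsPreconnected K) (hdisj : Disjoint K (a +ᵥ K))
    (hU : IsBounded (connectedComponentIn Kᶜ x)) :
    Disjoint (a +ᵥ K) (connectedComponentIn Kᶜ x) := by
  refine disjoint_left.2 fun y hyK' hyU => ?_
  have hKne : K.Nonempty := ⟨-a +ᵥ y, mem_vadd_set_iff_neg_vadd_mem.1 hyK'⟩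
  have ha : a ≠ 0 := by
    rintro rfl
    rw [zero_vadd, disjoint_self, bot_eq_empty] at hdisj
    exact hKne.ne_empty hdisj
  have hK'U : a +ᵥ K ⊆ connectedComponentIn Kᶜ x := by
    rw [connectedComponentIn_eq hyU, ← image_vadd]
    exact (hKc.image _ (continuous_const_vadd a).continuousOn).subset_connectedComponentIn
      (by rwa [image_vadd]) (by rw [image_vadd]; exact hdisj.subset_compl_left)
  have hshift : outerDomain K ⊆ a +ᵥ outerDomain K := by
    rw [← outerDomain_vadd]
    exact outerDomain_subset_of_disjoint
      ((disjoint_outerDomain_connectedComponentIn hU).mono_right hK'U)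
  refine ha (eq_zero_of_vadd_subset_of_isBounded (isBounded_compl_outerDomain h hKb)
    (hKne.mono (subset_compl_comm.1 outerDomain_subset_compl)) ?_)
  rw [vadd_set_compl]
  exact compl_subset_compl.2 hshift

theorem disjoint_closure_connectedComponentIn_compl_vadd (h : 1 < Module.rank ℝ E) {K : Set E}
    {a x : E} (hK : IsCompact K) (hKc : IsPreconnected K) (hdisj : Disjoint K (a +ᵥ K))
    (hU : IsBounded (connectedComponentIn Kᶜ x)) :
    Disjoint (closure (connectedComponentIn Kᶜ x)) (a +ᵥ K) :=
  disjoint_of_subset_left (closure_connectedComponentIn_compl_subset hK.isClosed x)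
    (disjoint_union_left.2
      ⟨(disjoint_vadd_connectedComponentIn_compl h hK.isBounded hKc hdisj hU).symm, hdisj⟩)

end Translation

theorem measure_lt_of_subset_of_nonempty_diff {X : Type*} [TopologicalSpace X] [MeasurableSpace X]
    [OpensMeasurableSpace X] {μ : Measure X} [μ.IsOpenPosMeasure] {s t : Set X}
    (hs : IsClosed s) (ht : IsOpen t) (hst : s ⊆ t) (hfin : μ s ≠ ⊤) (hne : (t \ s).Nonempty) :
    μ s < μ t :=
  calc μ s < μ s + μ (t \ s) := ENNReal.lt_add_right hfin ((ht.sdiff hs).measure_pos μ hne).ne'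
    _ = μ t := by
      rw [measure_add_sdiff hs.measurableSet.nullMeasurableSet, union_eq_self_of_subset_left hst]

theorem jordan_region_in_translate_interior_impossible_general
    (ftil : C(unitInterval, ℝ × ℝ))
    (a : ℝ × ℝ) (ftil' : C(unitInterval, ℝ × ℝ)) (hftil' : ∀ t, ftil' t = ftil t + a)
    (U : Set (ℝ × ℝ))
    (hU : ∃ x ∈ (Set.range ftil)ᶜ, U = connectedComponentIn (Set.range ftil)ᶜ x)
    (hUbdd : Bornology.IsBounded U)
    (U' : Set (ℝ × ℝ))
    (hU' : ∃ x ∈ (Set.range ftil')ᶜ, U' = connectedComponentIn (Set.range ftil')ᶜ x)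
    (D D' : Set (ℝ × ℝ)) (hD : D = closure U) (hD' : D' = closure U')
    (hdisj : Set.range ftil ∩ Set.range ftil' = ∅)
    (hin : Set.range ftil ⊆ U') :
    D ⊆ U' ∧ (volume D = volume D' → False) := by
  obtain ⟨x, hx, rfl⟩ := hU
  obtain ⟨x', hx', rfl⟩ := hU'
  subst hD hD'
  have hK : IsCompact (range ftil) := isCompact_range ftil.continuous
  have hK' : IsCompact (range ftil') := isCompact_range ftil'.continuous
  have htranslate : range ftil' = a +ᵥ range ftil := by
    rw [← image_vadd, ← range_comp]
    exact congrArg range (funext fun t => (hftil' t).trans (add_comm _ _))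
  have hUK' : Disjoint (closure (connectedComponentIn (range ftil)ᶜ x)) (range ftil') := by
    rw [htranslate] at hdisj ⊢
    exact disjoint_closure_connectedComponentIn_compl_vadd
      (by rw [rank_prod', Module.rank_self]; norm_num) hK (isPreconnected_range ftil.continuous)
      (disjoint_iff_inter_eq_empty.2 hdisj) hUbdd
  have hsub := closure_connectedComponentIn_subset_connectedComponentIn hK.isClosed
    (range_nonempty ftil) hx hUK' hin
  refine ⟨hsub, fun hvol => ?_⟩
  have hlt := measure_lt_of_subset_of_nonempty_diff (μ := volume) isClosed_closure
    hK'.isClosed.isOpen_compl.connectedComponentIn hsub hUbdd.closure.measure_lt_top.ne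
    (connectedComponentIn_compl_diff_closure_nonempty hK'.isClosed (range_nonempty ftil') hx' hUK')
  exact (hlt.trans_le (measure_mono subset_closure)).ne hvol

theorem jordan_region_in_translate_interior_impossible
    (ftil : C(unitInterval, ℝ × ℝ)) (hloop : ftil 0 = ftil 1)
    (hsimple : Set.InjOn ftil (Set.Ico (0 : unitInterval) 1))
    (a : ℝ × ℝ) (ftil' : C(unitInterval, ℝ × ℝ)) (hftil' : ∀ t, ftil' t = ftil t + a)
    (U : Set (ℝ × ℝ))
    (hU : ∃ x ∈ (Set.range ftil)ᶜ, U = connectedComponentIn (Set.range ftil)ᶜ x)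
    (hUbdd : Bornology.IsBounded U)
    (U' : Set (ℝ × ℝ))
    (hU' : ∃ x ∈ (Set.range ftil')ᶜ, U' = connectedComponentIn (Set.range ftil')ᶜ x)
    (hU'bdd : Bornology.IsBounded U')
    (D D' : Set (ℝ × ℝ)) (hD : D = closure U) (hD' : D' = closure U')
    (hdisj : Set.range ftil ∩ Set.range ftil' = ∅)
    (hin : Set.range ftil ⊆ U') :
    D ⊆ U' ∧ (volume D = volume D' → False) :=
  jordan_region_in_translate_interior_impossible_general ftil a ftil' hftil' U hU hUbdd U' hU' D D'
    hD hD' hdisj hin
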